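/- Let d ≥ 1 and let A : (Fin d → ℝ) → Matrix (Fin d) (Fin d) ℝ be such that A v is a graph Laplacian whenever v ⪰ 0. Let h ≥ 0, and let y₀ ∈ ℝ^d satisfy y₀ ⪰ 0 and ∑_i (y₀)_i = 1. Define the Strang splitting step x_{1/2} = exp((h/2)·A y₀) *ᵥ y₀, z₁ = exp(h·A x_{1/2}) *ᵥ y₀, x₁ = exp((h/2)·A z₁) *ᵥ x_{1/2}, and the smoothed update y₁ = (x₁ + z₁)/2. Then y₁ ⪰ 0 and ∑_i (y₁)_i = 1. -/

import Mathlib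

open Matrix

/-- An `n × n` real matrix is a graph Laplacian if its off-diagonal entries are
nonnegative, its diagonal entries are nonpositive, and each column sums to zero. -/
def IsGraphLaplacian {n : ℕ} (A : Matrix (Fin n) (Fin n) ℝ) : Prop :=
  (∀ k ℓ : Fin n, k ≠ ℓ → 0 ≤ A k ℓ) ∧ (∀ k : Fin n, A k k ≤ 0) ∧
    (∀ ℓ : Fin n, ∑ k : Fin n, A k ℓ = 0)

/-!
Every exponential in the scheme is `exp (t • L)` with `t ≥ 0` and `L` a graph Laplacian, and such
a matrix maps the standard simplex into itself. Positivity: shifting `L` by a multiple `c • 1` of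
the identity makes it entrywise nonnegative, and since the shift commutes with `L`,
`exp L = e⁻ᶜ • exp (L + c • 1)` is a series of nonnegative matrices. Mass: `1ᵀ L = 0` kills every
term of `1ᵀ exp L = ∑ 1ᵀ Lⁿ / n!` except the first, so `1ᵀ exp L = 1ᵀ`. The smoothed update `y₁` is
the midpoint of `x₁` and `z₁`, and the simplex is convex.
-/

open NormedSpace
open scoped Nat

namespace Matrix

variable {ι : Type*} [Fintype ι] [DecidableEq ι]

theorem hasSum_exp_series (M : Matrix ι ι ℝ) :
    HasSum (fun n => (n !⁻¹ : ℝ) • M ^ n) (exp M) := by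
  let _ : NormedRing (Matrix ι ι ℝ) := Matrix.linftyOpNormedRing
  let _ : NormedAlgebra ℝ (Matrix ι ι ℝ) := Matrix.linftyOpNormedAlgebra
  exact exp_series_hasSum_exp' M

theorem hasSum_exp_series_apply (M : Matrix ι ι ℝ) (i j : ι) :
    HasSum (fun n => (n !⁻¹ : ℝ) * (M ^ n) i j) (exp M i j) :=
  Pi.hasSum.1 (Pi.hasSum.1 (hasSum_exp_series M) i) j

theorem exp_apply_nonneg_of_nonneg {M : Matrix ι ι ℝ} (hM : ∀ i j, 0 ≤ M i j) (i j : ι) :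
    0 ≤ exp M i j :=
  (hasSum_exp_series_apply M i j).nonneg fun n =>
    mul_nonneg (by positivity) (pow_apply_nonneg hM n i j)

theorem exp_apply_nonneg_of_offDiag_nonneg {M : Matrix ι ι ℝ}
    (hM : ∀ i j, i ≠ j → 0 ≤ M i j) (i j : ι) : 0 ≤ exp M i j := by
  set c := ∑ k, |M k k|
  have hshift : ∀ i j, 0 ≤ (M + scalar ι c) i j := by
    intro i j
    rcases eq_or_ne i j with rfl | hij
    · have hc : |M i i| ≤ c := Finset.single_le_sum (fun k _ => abs_nonneg (M k k)) (Finset.mem_univ i)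
      simp only [add_apply, scalar_apply, diagonal_apply_eq]
      linarith [neg_abs_le (M i i)]
    · simpa [hij] using hM i j hij
  have hsplit : exp M = exp (M + scalar ι c) * diagonal (exp fun _ => -c) := by
    rw [← exp_diagonal, ← exp_add_of_commute (M + scalar ι c) (diagonal fun _ => -c)
      (scalar_commute (-c) (fun _ => Commute.all _ _) _).symm]
    congr 1
    ext k l
    by_cases hkl : k = l <;> simp [hkl]
  rw [hsplit, mul_diagonal, Pi.exp_def, ← Real.exp_eq_exp_ℝ]
  exact mul_nonneg (exp_apply_nonneg_of_nonneg hshift i j) (Real.exp_pos _).le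

theorem vecMul_exp_eq_self_of_vecMul_eq_zero {v : ι → ℝ} {M : Matrix ι ι ℝ} (h : v ᵥ* M = 0) :
    v ᵥ* exp M = v := by
  have hsum : HasSum (fun n => (n !⁻¹ : ℝ) • (v ᵥ* M ^ n)) (v ᵥ* exp M) :=
    Pi.hasSum.2 fun j => by
      simpa only [vecMul, dotProduct, Pi.smul_apply, smul_eq_mul, Finset.mul_sum, mul_left_comm]
        using hasSum_sum fun i _ => (hasSum_exp_series_apply M i j).mul_left (v i)
  have hterm : ∀ n, (n !⁻¹ : ℝ) • (v ᵥ* M ^ n) = if n = 0 then v else 0 := by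
    rintro (_ | n)
    · simp
    · rw [pow_succ', ← vecMul_vecMul, h, zero_vecMul, smul_zero, if_neg n.succ_ne_zero]
  simp_rw [hterm] at hsum
  exact hsum.unique (hasSum_ite_eq 0 v)

theorem exp_mulVec_mem_stdSimplex {M : Matrix ι ι ℝ} (hM : ∀ i j, i ≠ j → 0 ≤ M i j)
    (hcol : 1 ᵥ* M = 0) {v : ι → ℝ} (hv : v ∈ stdSimplex ℝ ι) :
    exp M *ᵥ v ∈ stdSimplex ℝ ι := by
  refine ⟨fun i => Finset.sum_nonneg fun j _ => ?_, ?_⟩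
  · exact mul_nonneg (exp_apply_nonneg_of_offDiag_nonneg hM i j) (hv.1 j)
  · rw [← one_dotProduct, dotProduct_mulVec, vecMul_exp_eq_self_of_vecMul_eq_zero hcol,
      one_dotProduct, hv.2]

end Matrix

namespace IsGraphLaplacian

variable {n : ℕ} {L : Matrix (Fin n) (Fin n) ℝ}

theorem smul (hL : IsGraphLaplacian L) {t : ℝ} (ht : 0 ≤ t) : IsGraphLaplacian (t • L) := by
  obtain ⟨hoff, hdiag, hcol⟩ := hL
  refine ⟨fun k l hkl => mul_nonneg ht (hoff k l hkl), fun k => mul_nonpos_of_nonneg_of_nonpos ht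
    (hdiag k), fun l => ?_⟩
  simp only [Matrix.smul_apply, smul_eq_mul, ← Finset.mul_sum, hcol l, mul_zero]

theorem one_vecMul_eq_zero (hL : IsGraphLaplacian L) : 1 ᵥ* L = 0 := by
  ext l
  simpa [vecMul, dotProduct] using hL.2.2 l

theorem exp_mulVec_mem_stdSimplex (hL : IsGraphLaplacian L) {v : Fin n → ℝ}
    (hv : v ∈ stdSimplex ℝ (Fin n)) : exp L *ᵥ v ∈ stdSimplex ℝ (Fin n) :=
  Matrix.exp_mulVec_mem_stdSimplex hL.1 hL.one_vecMul_eq_zero hv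

end IsGraphLaplacian

theorem strangSplitting_preserves_general
    {d : ℕ}
    (A : (Fin d → ℝ) → Matrix (Fin d) (Fin d) ℝ)
    (hA : ∀ v : Fin d → ℝ, (∀ i, 0 ≤ v i) → IsGraphLaplacian (A v))
    (h : ℝ) (hh : 0 ≤ h)
    (y₀ : Fin d → ℝ) (hy₀ : ∀ i, 0 ≤ y₀ i) (hy₀sum : ∑ i : Fin d, y₀ i = 1)
    (xhalf z₁ x₁ y₁ : Fin d → ℝ)
    (hxhalf : xhalf = NormedSpace.exp ((h / 2) • A y₀) *ᵥ y₀)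
    (hz₁ : z₁ = NormedSpace.exp (h • A xhalf) *ᵥ y₀)
    (hx₁ : x₁ = NormedSpace.exp ((h / 2) • A z₁) *ᵥ xhalf)
    (hy₁ : y₁ = (1 / 2 : ℝ) • (x₁ + z₁)) :
    (∀ i, 0 ≤ y₁ i) ∧ ∑ i : Fin d, y₁ i = 1 := by
  have step : ∀ {t : ℝ} {u v : Fin d → ℝ}, 0 ≤ t → u ∈ stdSimplex ℝ (Fin d) →
      v ∈ stdSimplex ℝ (Fin d) → exp (t • A u) *ᵥ v ∈ stdSimplex ℝ (Fin d) :=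
    fun ht hu hv => ((hA _ hu.1).smul ht).exp_mulVec_mem_stdSimplex hv
  have hh2 : 0 ≤ h / 2 := by positivity
  have hy₀' : y₀ ∈ stdSimplex ℝ (Fin d) := ⟨hy₀, hy₀sum⟩
  have hxhalf' : xhalf ∈ stdSimplex ℝ (Fin d) := hxhalf ▸ step hh2 hy₀' hy₀'
  have hz₁' : z₁ ∈ stdSimplex ℝ (Fin d) := hz₁ ▸ step hh hxhalf' hy₀'
  have hx₁' : x₁ ∈ stdSimplex ℝ (Fin d) := hx₁ ▸ step hh2 hz₁' hxhalf'
  rw [hy₁, smul_add]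
  exact convex_stdSimplex ℝ (Fin d) hx₁' hz₁' (by norm_num) (by norm_num) (by norm_num)

/-- The Strang splitting step with smoothing preserves positivity and mass. -/
theorem strangSplitting_preserves
    {d : ℕ} (hd : 1 ≤ d)
    (A : (Fin d → ℝ) → Matrix (Fin d) (Fin d) ℝ)
    (hA : ∀ v : Fin d → ℝ, (∀ i, 0 ≤ v i) → IsGraphLaplacian (A v))
    (h : ℝ) (hh : 0 ≤ h)
    (y₀ : Fin d → ℝ) (hy₀ : ∀ i, 0 ≤ y₀ i) (hy₀sum : ∑ i : Fin d, y₀ i = 1)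
    (xhalf z₁ x₁ y₁ : Fin d → ℝ)
    (hxhalf : xhalf = NormedSpace.exp ((h / 2) • A y₀) *ᵥ y₀)
    (hz₁ : z₁ = NormedSpace.exp (h • A xhalf) *ᵥ y₀)
    (hx₁ : x₁ = NormedSpace.exp ((h / 2) • A z₁) *ᵥ xhalf)
    (hy₁ : y₁ = (1 / 2 : ℝ) • (x₁ + z₁)) :
    (∀ i, 0 ≤ y₁ i) ∧ ∑ i : Fin d, y₁ i = 1 :=
  strangSplitting_preserves_general A hA h hh y₀ hy₀ hy₀sum xhalf z₁ x₁ y₁ hxhalf hz₁ hx₁ hy₁
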